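/- Let #X = d ≥ 2 and suppose G ≤ Aut(X*) is generated by two distinct non-trivial elements a and b with a² = b² = 1 such that ab is spherically transitive. Then F(G) = r/4, where r is the number of elements of {a, b} that fix at least one end of X*. -/

import Mathlib

/-- The automorphism group of the rooted `d`-ary tree `X*` (words over `Fin d`),
realized as the subgroup of permutations of `List (Fin d)` preserving word length
and the prefix relation. -/
def treeAutGroup (d : ℕ) : Subgroup (Equiv.Perm (List (Fin d))) where
  carrier := {g | (∀ v, (g v).length = v.length) ∧ ∀ v w, v <+: w ↔ g v <+: g w}
  one_mem' := ⟨fun _ => rfl, fun _ _ => Iff.rfl⟩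
  mul_mem' := by
    rintro a b ⟨ha1, ha2⟩ ⟨hb1, hb2⟩
    refine ⟨fun v => ?_, fun v w => ?_⟩
    · simpa [Equiv.Perm.mul_apply] using (ha1 (b v)).trans (hb1 v)
    · simpa [Equiv.Perm.mul_apply] using (hb2 v w).trans (ha2 (b v) (b w))
  inv_mem' := by
    rintro g ⟨h1, h2⟩
    refine ⟨fun v => ?_, fun v w => ?_⟩
    · conv_rhs => rw [← Equiv.apply_symm_apply g v]
      exact (h1 _).symm
    · have := (h2 (g⁻¹ v) (g⁻¹ w)).symm
      simpa [Equiv.apply_symm_apply] using this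

/-- An automorphism of the rooted `d`-ary tree. -/
abbrev TreeAut (d : ℕ) : Type := ↥(treeAutGroup d)

namespace TreeAut

variable {d : ℕ}

theorem length_apply (g : TreeAut d) (v : List (Fin d)) :
    ((g : Equiv.Perm (List (Fin d))) v).length = v.length := g.2.1 v

theorem prefix_iff (g : TreeAut d) (v w : List (Fin d)) :
    v <+: w ↔ (g : Equiv.Perm (List (Fin d))) v <+: (g : Equiv.Perm (List (Fin d))) w :=
  g.2.2 v w

theorem apply_append (g : TreeAut d) (v w : List (Fin d)) :
    (g : Equiv.Perm (List (Fin d))) (v ++ w) =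
      (g : Equiv.Perm (List (Fin d))) v ++
        (((g : Equiv.Perm (List (Fin d))) (v ++ w)).drop v.length) := by
  obtain ⟨t, ht⟩ := (g.prefix_iff v (v ++ w)).mp ⟨w, rfl⟩
  rw [← ht, List.drop_left' (g.length_apply v)]

/-- The restriction of a tree automorphism at the vertex `v`, as a permutation of words:
the unique map with `g (v ++ w) = g v ++ (restrictPerm g v) w`. -/
def restrictPerm (g : TreeAut d) (v : List (Fin d)) : Equiv.Perm (List (Fin d)) where
  toFun w := (((g : Equiv.Perm (List (Fin d)))) (v ++ w)).drop v.length
  invFun w := (((g : Equiv.Perm (List (Fin d))).symm)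
      (((g : Equiv.Perm (List (Fin d))) v) ++ w)).drop v.length
  left_inv w := by
    dsimp only
    have h := (g.apply_append v w).symm
    rw [h, Equiv.symm_apply_apply, List.drop_left]
  right_inv w := by
    dsimp only
    have hpre : v <+: (g : Equiv.Perm (List (Fin d))).symm
        ((g : Equiv.Perm (List (Fin d))) v ++ w) := by
      have := (g.prefix_iff v ((g : Equiv.Perm (List (Fin d))).symm
        ((g : Equiv.Perm (List (Fin d))) v ++ w))).symm
      rw [Equiv.apply_symm_apply] at this
      exact this.mp ⟨w, rfl⟩
    obtain ⟨u, hu⟩ := hpre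
    rw [← hu, List.drop_left]
    have h2 : (g : Equiv.Perm (List (Fin d))) (v ++ u) =
        (g : Equiv.Perm (List (Fin d))) v ++ w := by rw [hu, Equiv.apply_symm_apply]
    rw [h2, List.drop_left' (g.length_apply v)]

theorem restrictPerm_mem (g : TreeAut d) (v : List (Fin d)) :
    restrictPerm g v ∈ treeAutGroup d := by
  constructor
  · intro w
    show (((g : Equiv.Perm (List (Fin d))) (v ++ w)).drop v.length).length = w.length
    rw [List.length_drop, g.length_apply, List.length_append]
    omega
  · intro w w'
    show w <+: w' ↔
      ((g : Equiv.Perm (List (Fin d))) (v ++ w)).drop v.length <+: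
        ((g : Equiv.Perm (List (Fin d))) (v ++ w')).drop v.length
    calc w <+: w' ↔ v ++ w <+: v ++ w' := (List.prefix_append_right_inj v).symm
      _ ↔ (g : Equiv.Perm (List (Fin d))) (v ++ w) <+:
            (g : Equiv.Perm (List (Fin d))) (v ++ w') := g.prefix_iff _ _
      _ ↔ _ := by
            conv_lhs => rw [g.apply_append v w, g.apply_append v w']
            exact List.prefix_append_right_inj _

/-- The restriction `g|_v` of a tree automorphism `g` at a vertex `v`, as a tree
automorphism: the unique automorphism with `g (v ++ w) = g v ++ g|_v w` for all `w`. -/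
def restrict (g : TreeAut d) (v : List (Fin d)) : TreeAut d :=
  ⟨restrictPerm g v, restrictPerm_mem g v⟩

/-- `g` fixes the end (infinite word) `w` of the tree: it fixes every finite initial
segment of `w`. -/
def FixesEnd (g : TreeAut d) (w : ℕ → Fin d) : Prop :=
  ∀ n : ℕ, (g : Equiv.Perm (List (Fin d))) ((List.range n).map w) = (List.range n).map w

end TreeAut

/-- `g` is spherically transitive: the cyclic group it generates acts transitively on
the words of length `n`, for every `n ≥ 1`. -/
def SphericallyTransitive {d : ℕ} (g : TreeAut d) : Prop :=
  ∀ n : ℕ, 1 ≤ n → ∀ v w : List (Fin d), v.length = n → w.length = n →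
    ∃ k : ℤ, ((g ^ k : TreeAut d) : Equiv.Perm (List (Fin d))) v = w

/-- The `n`-th level of the tree: words of length `n`. -/
abbrev Level (d n : ℕ) : Type := {v : List (Fin d) // v.length = n}

instance Level.finite (d n : ℕ) : Finite (Level d n) := by
  have key : ∀ v : Level d n,
      v.1 = List.ofFn (fun i : Fin n => v.1.get (Fin.cast v.2.symm i)) := by
    intro v
    refine List.ext_get (by simp [v.2]) ?_
    intro i h1 h2
    simp [List.get_ofFn, Fin.cast]
  refine Finite.of_injective
    (fun v : Level d n => fun i : Fin n => v.1.get (Fin.cast v.2.symm i)) ?_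
  intro v w h
  have h' : (fun i : Fin n => v.1.get (Fin.cast v.2.symm i)) =
      (fun i : Fin n => w.1.get (Fin.cast w.2.symm i)) := h
  refine Subtype.ext ?_
  rw [key v, key w, h']

/-- The action of a tree automorphism on the `n`-th level of the tree. -/
def levelHom (d n : ℕ) : TreeAut d →* Equiv.Perm (Level d n) where
  toFun g :=
    { toFun := fun v => ⟨(g : Equiv.Perm (List (Fin d))) v.1, by rw [g.2.1, v.2]⟩
      invFun := fun v => ⟨((g⁻¹ : TreeAut d) : Equiv.Perm (List (Fin d))) v.1,
        by rw [(g⁻¹ : TreeAut d).2.1, v.2]⟩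
      left_inv := fun v => Subtype.ext (by simp)
      right_inv := fun v => Subtype.ext (by simp) }
  map_one' := by ext v; rfl
  map_mul' g h := by ext v; rfl

/-- The fraction of elements of `G_n` (the image of `G` acting on level `n`)
having at least one fixed point on level `n`. -/
noncomputable def fixedRatio {d : ℕ} (G : Subgroup (TreeAut d)) (n : ℕ) : ℝ :=
  (Nat.card {p : Equiv.Perm (Level d n) // p ∈ G.map (levelHom d n) ∧ ∃ v, p v = v} : ℝ) /
    (Nat.card (G.map (levelHom d n)) : ℝ)

/-- `G ≤ Aut(X*)` is contracting: there is a finite subset `N ⊆ G` such that every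
`g ∈ G` has all its restrictions at sufficiently long words inside `N`. -/
def Contracting {d : ℕ} (G : Subgroup (TreeAut d)) : Prop :=
  ∃ N : Set (TreeAut d), N.Finite ∧ N ⊆ (G : Set (TreeAut d)) ∧
    ∀ g ∈ G, ∃ m : ℕ, 1 ≤ m ∧ ∀ v : List (Fin d), m ≤ v.length → TreeAut.restrict g v ∈ N

/-- The set `N₁` of elements of `G` fixing a non-empty word `v` with `g|_v = g`. -/
def N1 {d : ℕ} (G : Subgroup (TreeAut d)) : Set (TreeAut d) :=
  {g | g ∈ G ∧ ∃ v : List (Fin d), v ≠ [] ∧ TreeAut.restrict g v = g ∧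
    (g : Equiv.Perm (List (Fin d))) v = v}


/-!
On level `n` the involutions `a, b` act as involutions `A, B` whose product `C = AB` is a
regular cyclic permutation of the `d ^ n` vertices, so `⟨A, B⟩` is dihedral of order `2 d ^ n`:
it consists of the rotations `C ^ z`, of which only `1` has a fixed point, and the reflections
`C ^ z * A`. If `A x₀ = C ^ s x₀`, then `C ^ z * A` moves `C ^ k x₀` to `C ^ (z - k + s) x₀`, so it
has a fixed point iff `C ^ z = C ^ (2k - s)` for some `k`. Hence exactly `orderOf (C ^ 2) =
d ^ n / gcd (d, 2)` reflections have a fixed point, and `F(G) = 1 / (2 gcd (d, 2))`.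
The same criterion shows that on every level both `A` and `B` have a fixed point when `d` is
odd, and exactly one of them does when `d` is even. Fixed vertices are closed under prefixes,
so by compactness of `X^ω` an automorphism fixes an end iff it fixes a vertex on every level;
thus `r = 2 / gcd (d, 2)`.
-/

open Equiv Subgroup Filter Topology

section Involutions

variable {M : Type*} [Group M] {A B : M}

theorem semiconjBy_mul_inv_of_involutions (hA : A * A = 1) (hB : B * B = 1) :
    SemiconjBy A (A * B) (A * B)⁻¹ := by
  rw [SemiconjBy, mul_inv_rev, inv_eq_of_mul_eq_one_right hA, inv_eq_of_mul_eq_one_right hB,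
    ← mul_assoc, hA, one_mul, mul_assoc, hA, mul_one]

theorem mul_zpow_of_involutions (hA : A * A = 1) (hB : B * B = 1) (z : ℤ) :
    A * (A * B) ^ z = (A * B) ^ (-z) * A := by
  rw [zpow_neg, ← inv_zpow]
  exact (semiconjBy_mul_inv_of_involutions hA hB).zpow_right z

theorem coe_closure_pair_of_involutions (hA : A * A = 1) (hB : B * B = 1) :
    (closure {A, B} : Set M) =
      (zpowers (A * B) : Set M) ∪ (· * A) '' (zpowers (A * B) : Set M) := by
  set K := (zpowers (A * B) : Set M) ∪ (· * A) '' (zpowers (A * B) : Set M)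
  have hA_mul : ∀ y ∈ K, A * y ∈ K := by
    rintro _ (⟨z, rfl⟩ | ⟨_, ⟨z, rfl⟩, rfl⟩)
    · exact Or.inr ⟨_, ⟨-z, rfl⟩, (mul_zpow_of_involutions hA hB z).symm⟩
    · refine Or.inl ⟨-z, ?_⟩
      rw [← mul_assoc, mul_zpow_of_involutions hA hB z, mul_assoc, hA, mul_one]
  have hC_mul : ∀ y ∈ K, (A * B) * y ∈ K := by
    rintro _ (⟨z, rfl⟩ | ⟨_, ⟨z, rfl⟩, rfl⟩)
    · exact Or.inl ⟨z + 1, by simp only [zpow_add_one, ← zpow_one_add, add_comm]⟩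
    · exact Or.inr ⟨_, ⟨1 + z, rfl⟩, by simp only [zpow_add, zpow_one, mul_assoc]⟩
  have hB_eq : B = A * (A * B) := by rw [← mul_assoc, hA, one_mul]
  have hgen_mul : ∀ x ∈ ({A, B} : Set M), ∀ y ∈ K, x * y ∈ K := by
    rintro x (rfl | rfl) y hy
    · exact hA_mul y hy
    · rw [hB_eq, mul_assoc]
      exact hA_mul _ (hC_mul y hy)
  apply Set.Subset.antisymm
  · intro p hp
    induction hp using closure_induction_left with
    | one => exact Or.inl (one_mem _)
    | mul_left x hx y _ ih => exact hgen_mul x hx y ih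
    | inv_mul_cancel x hx y _ ih =>
      have hx_inv : x⁻¹ = x := by
        rcases hx with rfl | rfl
        exacts [inv_eq_of_mul_eq_one_right hA, inv_eq_of_mul_eq_one_right hB]
      rw [hx_inv]
      exact hgen_mul x hx y ih
  · have hAH : A ∈ closure {A, B} := subset_closure (by simp)
    have hCH : A * B ∈ closure {A, B} := mul_mem hAH (subset_closure (by simp))
    rintro p (hp | ⟨c, hc, rfl⟩)
    · exact zpowers_le.mpr hCH hp
    · exact mul_mem (zpowers_le.mpr hCH hc) hAH

end Involutions

section RegularCyclic

variable {α : Type*} {C : Perm α}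

theorem eq_of_mem_zpowers_of_apply_eq (htrans : ∀ x y : α, ∃ k : ℤ, (C ^ k) x = y)
    {c c' : Perm α} (hc : c ∈ zpowers C) (hc' : c' ∈ zpowers C) {x : α} (h : c x = c' x) :
    c = c' := by
  obtain ⟨z, rfl⟩ := hc
  obtain ⟨z', rfl⟩ := hc'
  ext y
  obtain ⟨k, rfl⟩ := htrans x y
  simp only [← Perm.mul_apply, (Commute.zpow_zpow_self C _ k).eq]
  rw [Perm.mul_apply, h, Perm.mul_apply]

theorem zpow_apply_eq_zpow_apply_iff (htrans : ∀ x y : α, ∃ k : ℤ, (C ^ k) x = y) {a b : ℤ}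
    {x : α} : (C ^ a) x = (C ^ b) x ↔ C ^ a = C ^ b :=
  ⟨eq_of_mem_zpowers_of_apply_eq htrans (zpow_mem_zpowers C a) (zpow_mem_zpowers C b),
    fun h => h ▸ rfl⟩

theorem orderOf_eq_card_of_zpow_transitive [Nonempty α]
    (htrans : ∀ x y : α, ∃ k : ℤ, (C ^ k) x = y) : orderOf C = Nat.card α := by
  obtain ⟨x₀⟩ := ‹Nonempty α›
  rw [← Nat.card_zpowers]
  refine Nat.card_eq_of_bijective (fun c : zpowers C => (c : Perm α) x₀) ⟨?_, fun y => ?_⟩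
  · exact fun c c' h => Subtype.ext (eq_of_mem_zpowers_of_apply_eq htrans c.2 c'.2 h)
  · obtain ⟨k, hk⟩ := htrans x₀ y
    exact ⟨⟨C ^ k, zpow_mem_zpowers C k⟩, hk⟩

end RegularCyclic

theorem Int.exists_dvd_two_mul_sub_iff {m : ℕ} {n : ℤ} :
    (∃ k : ℤ, (m : ℤ) ∣ 2 * k - n) ↔ Odd m ∨ Even n := by
  constructor
  · rintro ⟨k, hk⟩
    refine (Nat.even_or_odd m).elim (fun hm => Or.inr ?_) Or.inl
    have h2 : (2 : ℤ) ∣ 2 * k - n := (Int.natCast_dvd_natCast.mpr hm.two_dvd).trans hk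
    rw [even_iff_two_dvd]
    simpa using (dvd_mul_right 2 k).sub h2
  · rintro (⟨j, rfl⟩ | ⟨j, rfl⟩)
    · exact ⟨(j + 1) * n, ⟨n, by push_cast; ring⟩⟩
    · exact ⟨j, by simp [two_mul]⟩

section DihedralPerm

variable {α : Type*} {A B : Perm α}

theorem notMem_zpowers_of_involutions (hA : A * A = 1) (hB : B * B = 1)
    (htrans : ∀ x y : α, ∃ k : ℤ, ((A * B) ^ k) x = y) (hcard : 3 ≤ Nat.card α) :
    A ∉ zpowers (A * B) := by
  have : Nonempty α := (Nat.card_pos_iff.mp (by omega)).1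
  intro hAC
  obtain ⟨j, hj⟩ := mem_zpowers_iff.mp hAC
  have hcomm := (Commute.refl (A * B)).zpow_left j
  rw [hj] at hcomm
  have hinv : (A * B)⁻¹ = A * B :=
    mul_right_cancel ((semiconjBy_mul_inv_of_involutions hA hB).eq.symm.trans hcomm.eq)
  have hsq : (A * B) ^ 2 = 1 := by
    rw [sq]
    nth_rewrite 1 [← hinv]
    exact inv_mul_cancel _
  have := Nat.le_of_dvd two_pos (orderOf_dvd_of_pow_eq_one hsq)
  rw [orderOf_eq_card_of_zpow_transitive htrans] at this
  omega

theorem exists_fixed_zpow_mul_iff (hA : A * A = 1) (hB : B * B = 1)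
    (htrans : ∀ x y : α, ∃ k : ℤ, ((A * B) ^ k) x = y) {x₀ : α} {s : ℤ}
    (hs : A x₀ = ((A * B) ^ s) x₀) (z : ℤ) :
    (∃ x, ((A * B) ^ z * A) x = x) ↔ ∃ k : ℤ, (A * B) ^ z = (A * B) ^ (2 * k - s) := by
  have hfix : ∀ k : ℤ, ((A * B) ^ z * A) (((A * B) ^ k) x₀) = ((A * B) ^ k) x₀ ↔
      (A * B) ^ z = (A * B) ^ (2 * k - s) := by
    intro k
    rw [Perm.mul_apply, ← Perm.mul_apply A, mul_zpow_of_involutions hA hB, Perm.mul_apply, hs,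
      ← Perm.mul_apply, ← Perm.mul_apply, ← zpow_add, ← zpow_add,
      zpow_apply_eq_zpow_apply_iff htrans, zpow_eq_zpow_iff_modEq, zpow_eq_zpow_iff_modEq,
      Int.modEq_iff_dvd, Int.modEq_iff_dvd]
    ring_nf
  constructor
  · rintro ⟨x, hx⟩
    obtain ⟨k, rfl⟩ := htrans x₀ x
    exact ⟨k, (hfix k).mp hx⟩
  · rintro ⟨k, hk⟩
    exact ⟨_, (hfix k).mpr hk⟩

theorem card_closure_pair_of_involutions (hA : A * A = 1) (hB : B * B = 1)
    (htrans : ∀ x y : α, ∃ k : ℤ, ((A * B) ^ k) x = y) (hcard : 3 ≤ Nat.card α) :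
    Nat.card (closure ({A, B} : Set (Perm α))) = 2 * Nat.card α := by
  obtain ⟨_, _⟩ := Nat.card_pos_iff.mp (by omega : 0 < Nat.card α)
  have hdisj : Disjoint (zpowers (A * B) : Set (Perm α)) ((· * A) '' zpowers (A * B)) := by
    refine Set.disjoint_left.mpr ?_
    rintro _ hc ⟨c, hc', rfl⟩
    exact notMem_zpowers_of_involutions hA hB htrans hcard
      (by simpa using mul_mem (inv_mem hc') hc)
  rw [← SetLike.coe_sort_coe, Nat.card_coe_set_eq, coe_closure_pair_of_involutions hA hB,
    Set.ncard_union_eq hdisj, Set.ncard_image_of_injective _ (mul_left_injective A),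
    ← Nat.card_coe_set_eq, SetLike.coe_sort_coe, Nat.card_zpowers,
    orderOf_eq_card_of_zpow_transitive htrans]
  ring

theorem card_fixed_closure_pair_of_involutions (hA : A * A = 1) (hB : B * B = 1)
    (htrans : ∀ x y : α, ∃ k : ℤ, ((A * B) ^ k) x = y) (hcard : 3 ≤ Nat.card α) :
    Nat.card {p : Perm α // p ∈ closure {A, B} ∧ ∃ x, p x = x} =
      1 + Nat.card α / Nat.gcd (Nat.card α) 2 := by
  obtain ⟨_, _⟩ := Nat.card_pos_iff.mp (by omega : 0 < Nat.card α)
  have x₀ : α := Classical.ofNonempty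
  obtain ⟨s, hs⟩ := htrans x₀ (A x₀)
  set C := A * B
  have hfixed : {p | p ∈ closure {A, B} ∧ ∃ x, p x = x} =
      insert 1 ((· * A) '' Set.range fun k : ℤ => C ^ (2 * k - s)) := by
    ext p
    rw [Set.mem_ofPred_eq, ← SetLike.mem_coe, coe_closure_pair_of_involutions hA hB]
    constructor
    · rintro ⟨hc | ⟨c, hc, rfl⟩, x, hx⟩
      · exact Or.inl (eq_of_mem_zpowers_of_apply_eq htrans hc (one_mem _) hx)
      · obtain ⟨z, rfl⟩ := mem_zpowers_iff.mp hc
        obtain ⟨k, hk⟩ := (exists_fixed_zpow_mul_iff hA hB htrans hs.symm z).mp ⟨x, hx⟩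
        exact Or.inr ⟨_, ⟨k, hk.symm⟩, rfl⟩
    · rintro (rfl | ⟨_, ⟨k, rfl⟩, rfl⟩)
      · exact ⟨Or.inl (one_mem _), x₀, rfl⟩
      · exact ⟨Or.inr ⟨_, zpow_mem_zpowers _ _, rfl⟩,
          (exists_fixed_zpow_mul_iff hA hB htrans hs.symm _).mpr ⟨k, rfl⟩⟩
  have hone : (1 : Perm α) ∉ (· * A) '' Set.range fun k : ℤ => C ^ (2 * k - s) := by
    rintro ⟨_, ⟨k, rfl⟩, hk⟩
    have hinv := inv_mem (zpow_mem_zpowers C (2 * k - s))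
    rw [← eq_inv_of_mul_eq_one_right hk] at hinv
    exact notMem_zpowers_of_involutions hA hB htrans hcard hinv
  have hrange : (Set.range fun k : ℤ => C ^ (2 * k - s)) =
      (C ^ (-s) * ·) '' (zpowers (C ^ 2) : Set (Perm α)) := by
    rw [coe_zpowers, ← Set.range_comp]
    congr 1
    funext k
    rw [Function.comp_apply, ← zpow_natCast, ← zpow_mul, ← zpow_add]
    ring_nf
  rw [← Set.coe_ofPred, Nat.card_coe_set_eq, hfixed, Set.ncard_insert_of_notMem hone,
    Set.ncard_image_of_injective _ (mul_left_injective A), hrange,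
    Set.ncard_image_of_injective _ (mul_right_injective _), ← Nat.card_coe_set_eq,
    SetLike.coe_sort_coe, Nat.card_zpowers, orderOf_pow' _ two_ne_zero,
    orderOf_eq_card_of_zpow_transitive htrans, add_comm]

theorem exists_fixed_iff_parity_of_involutions (hA : A * A = 1) (hB : B * B = 1)
    (htrans : ∀ x y : α, ∃ k : ℤ, ((A * B) ^ k) x = y) {x₀ : α} {s : ℤ}
    (hs : A x₀ = ((A * B) ^ s) x₀) :
    ((∃ x, A x = x) ↔ Odd (Nat.card α) ∨ Even s) ∧
      ((∃ x, B x = x) ↔ Odd (Nat.card α) ∨ Odd s) := by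
  have : Nonempty α := ⟨x₀⟩
  have hcrit : ∀ z : ℤ, (∃ x, ((A * B) ^ z * A) x = x) ↔ Odd (Nat.card α) ∨ Even (s + z) := by
    intro z
    simp only [exists_fixed_zpow_mul_iff hA hB htrans hs, zpow_eq_zpow_iff_modEq,
      Int.modEq_iff_dvd, sub_sub, orderOf_eq_card_of_zpow_transitive htrans,
      Int.exists_dvd_two_mul_sub_iff]
  have hB_eq : (A * B) ^ (-1 : ℤ) * A = B := by
    rw [zpow_neg_one, mul_inv_rev, inv_mul_cancel_right, inv_eq_of_mul_eq_one_right hB]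
  constructor
  · simpa using hcrit 0
  · have h := hcrit (-1)
    rwa [hB_eq, ← sub_eq_add_neg, Int.even_sub_one, Int.not_even_iff_odd] at h

theorem exists_fixed_of_odd_card [Nonempty α] (hA : A * A = 1) (hB : B * B = 1)
    (htrans : ∀ x y : α, ∃ k : ℤ, ((A * B) ^ k) x = y) (hodd : Odd (Nat.card α)) :
    (∃ x, A x = x) ∧ ∃ x, B x = x := by
  have x₀ : α := Classical.ofNonempty
  obtain ⟨s, hs⟩ := htrans x₀ (A x₀)
  have hpar := exists_fixed_iff_parity_of_involutions hA hB htrans hs.symm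
  exact ⟨hpar.1.mpr (Or.inl hodd), hpar.2.mpr (Or.inl hodd)⟩

theorem exists_fixed_iff_not_of_even_card [Nonempty α] (hA : A * A = 1) (hB : B * B = 1)
    (htrans : ∀ x y : α, ∃ k : ℤ, ((A * B) ^ k) x = y) (heven : Even (Nat.card α)) :
    (∃ x, A x = x) ↔ ¬ ∃ x, B x = x := by
  have x₀ : α := Classical.ofNonempty
  obtain ⟨s, hs⟩ := htrans x₀ (A x₀)
  have hpar := exists_fixed_iff_parity_of_involutions hA hB htrans hs.symm
  rw [hpar.1, hpar.2, ← Nat.not_even_iff_odd, ← Int.not_even_iff_odd]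
  tauto

end DihedralPerm

namespace TreeAut

variable {d : ℕ}

theorem apply_eq_self_of_prefix (g : TreeAut d) {u v : List (Fin d)}
    (hu : (g : Perm (List (Fin d))) u = u) (hvu : v <+: u) : (g : Perm (List (Fin d))) v = v := by
  have hgv : (g : Perm (List (Fin d))) v <+: u := hu ▸ (g.prefix_iff v u).mp hvu
  exact (List.prefix_of_prefix_length_le hgv hvu (g.length_apply v).le).eq_of_length
    (g.length_apply v)

theorem antitone_exists_fixed_level (g : TreeAut d) :
    Antitone fun n => ∃ v : Level d n, levelHom d n g v = v := by
  intro k n hkn ⟨v, hv⟩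
  refine ⟨⟨v.1.take k, by simp [v.2, hkn]⟩, Subtype.ext ?_⟩
  exact g.apply_eq_self_of_prefix (congrArg Subtype.val hv) (List.take_prefix k v.1)

theorem exists_fixesEnd_iff (g : TreeAut d) :
    (∃ w, FixesEnd g w) ↔ ∀ n, ∃ v : Level d n, levelHom d n g v = v := by
  constructor
  · rintro ⟨w, hw⟩ n
    exact ⟨⟨(List.range n).map w, by simp⟩, Subtype.ext (hw n)⟩
  intro h
  obtain ⟨⟨v₁, hv₁⟩, -⟩ := h 1
  obtain ⟨x, -⟩ := List.length_eq_one_iff.mp hv₁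
  set T : ℕ → Set (ℕ → Fin d) := fun n =>
    {w | (g : Perm (List (Fin d))) ((List.range n).map w) = (List.range n).map w}
  have hT_closed : ∀ n, IsClosed (T n) := by
    intro n
    have hofFn : ∀ w : ℕ → Fin d, List.ofFn (fun i : Fin n => w i) = (List.range n).map w := by
      intro w
      rw [List.ofFn_eq_map, ← List.map_coe_finRange_eq_range, List.map_map]
      rfl
    have hT : T n = (fun w (i : Fin n) => w i) ⁻¹'
        {u | (g : Perm (List (Fin d))) (List.ofFn u) = List.ofFn u} := by
      ext w
      simp only [T, Set.mem_preimage, Set.mem_ofPred_eq, hofFn]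
    rw [hT]
    exact (isClosed_discrete _).preimage
      (continuous_pi fun i : Fin n => continuous_apply (i : ℕ))
  have hT_anti : ∀ n, T (n + 1) ⊆ T n := by
    intro n w hw
    refine g.apply_eq_self_of_prefix hw ?_
    rw [List.range_succ, List.map_append]
    exact List.prefix_append _ _
  have hT_nonempty : ∀ n, (T n).Nonempty := by
    intro n
    obtain ⟨⟨v, hv⟩, hfix⟩ := h n
    refine ⟨fun i => v.getD i x, ?_⟩
    have hmap : (List.range n).map (fun i => v.getD i x) = v :=
      List.ext_getElem (by simp [hv]) fun i _ hi => by simp [List.getElem?_eq_getElem hi]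
    simp only [T, Set.mem_ofPred_eq, hmap]
    exact congrArg Subtype.val hfix
  obtain ⟨w, hw⟩ := IsCompact.nonempty_iInter_of_sequence_nonempty_isCompact_isClosed T hT_anti
    hT_nonempty (hT_closed 0).isCompact hT_closed
  exact ⟨w, Set.mem_iInter.mp hw⟩

end TreeAut

theorem Set.ncard_sep_pair_eq_one {α : Type*} {a b : α} {p : α → Prop} (h : p a ↔ ¬ p b) :
    {x ∈ ({a, b} : Set α) | p x}.ncard = 1 := by
  rw [Set.ncard_eq_one]
  by_cases ha : p a
  · refine ⟨a, Set.ext fun x => ?_⟩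
    simp only [Set.mem_insert_iff, Set.mem_singleton_iff, Set.mem_ofPred_eq]
    grind
  · refine ⟨b, Set.ext fun x => ?_⟩
    simp only [Set.mem_insert_iff, Set.mem_singleton_iff, Set.mem_ofPred_eq]
    grind

theorem Nat.gcd_pow_two_eq_gcd_two (d : ℕ) {n : ℕ} (hn : n ≠ 0) :
    Nat.gcd (d ^ n) 2 = Nat.gcd d 2 := by
  rcases Nat.even_or_odd d with h | h
  · rw [Nat.gcd_eq_right (h.pow_of_ne_zero hn).two_dvd, Nat.gcd_eq_right h.two_dvd]
  · rw [(Nat.coprime_two_right.mpr (h.pow (n := n))).gcd_eq_one,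
      (Nat.coprime_two_right.mpr h).gcd_eq_one]

theorem card_level (d n : ℕ) : Nat.card (Level d n) = d ^ n := by
  change Nat.card (List.Vector (Fin d) n) = d ^ n
  simp

theorem Level.nonempty {d : ℕ} (hd : 0 < d) (n : ℕ) : Nonempty (Level d n) :=
  ⟨⟨List.replicate n ⟨0, hd⟩, List.length_replicate⟩⟩

theorem levelHom_mul_self {d n : ℕ} {g : TreeAut d} (hg : g * g = 1) :
    levelHom d n g * levelHom d n g = 1 := by
  rw [← map_mul, hg, map_one]

theorem SphericallyTransitive.levelHom_zpow {d : ℕ} {g : TreeAut d}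
    (hst : SphericallyTransitive g) {n : ℕ} (hn : 1 ≤ n) (x y : Level d n) :
    ∃ k : ℤ, (levelHom d n g ^ k) x = y := by
  obtain ⟨k, hk⟩ := hst n hn x.1 y.1 x.2 y.2
  exact ⟨k, by rw [← map_zpow]; exact Subtype.ext hk⟩

section DihedralTree

variable {d : ℕ} {a b : TreeAut d}

theorem fixedRatio_closure_pair (hd : 2 ≤ d) (ha2 : a * a = 1) (hb2 : b * b = 1)
    (hst : SphericallyTransitive (a * b)) {n : ℕ} (hn : 2 ≤ n) :
    fixedRatio (closure {a, b}) n = 1 / (2 * (d : ℝ) ^ n) + 1 / (2 * Nat.gcd d 2) := by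
  have hA := levelHom_mul_self (n := n) ha2
  have hB := levelHom_mul_self (n := n) hb2
  have htrans := map_mul (levelHom d n) a b ▸ hst.levelHom_zpow (by omega : 1 ≤ n)
  have hcard : 3 ≤ Nat.card (Level d n) := by
    rw [card_level]
    calc 3 ≤ 2 ^ 2 := by norm_num
      _ ≤ d ^ n := (Nat.pow_le_pow_left hd 2).trans (Nat.pow_le_pow_right (by omega) hn)
  rw [fixedRatio, MonoidHom.map_closure, Set.image_pair,
    card_fixed_closure_pair_of_involutions hA hB htrans hcard,
    card_closure_pair_of_involutions hA hB htrans hcard, card_level,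
    Nat.gcd_pow_two_eq_gcd_two d (by omega)]
  have hd0 : (d : ℝ) ^ n ≠ 0 := by positivity
  have hg0 : (Nat.gcd d 2 : ℝ) ≠ 0 := by exact_mod_cast (Nat.gcd_pos_of_pos_right d two_pos).ne'
  rw [Nat.cast_add, Nat.cast_div ((Nat.gcd_dvd_left d 2).trans (dvd_pow_self d (by omega))) hg0]
  push_cast
  field_simp

theorem tendsto_fixedRatio_closure_pair (hd : 2 ≤ d) (ha2 : a * a = 1) (hb2 : b * b = 1)
    (hst : SphericallyTransitive (a * b)) :
    Tendsto (fixedRatio (closure {a, b})) atTop (𝓝 (1 / (2 * Nat.gcd d 2))) := by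
  have hd1 : (1 : ℝ) < d := by exact_mod_cast hd
  have hlim : Tendsto (fun n : ℕ => 1 / (2 * (d : ℝ) ^ n) + 1 / (2 * Nat.gcd d 2)) atTop
      (𝓝 (1 / (2 * Nat.gcd d 2))) := by
    simpa using (((tendsto_pow_atTop_atTop_of_one_lt hd1).const_mul_atTop two_pos
      ).inv_tendsto_atTop).add_const (1 / (2 * (Nat.gcd d 2 : ℝ)))
  refine hlim.congr' ?_
  filter_upwards [eventually_ge_atTop 2] with n hn
  exact (fixedRatio_closure_pair hd ha2 hb2 hst hn).symm

theorem exists_fixesEnd_of_odd (hodd : Odd d) (ha2 : a * a = 1) (hb2 : b * b = 1)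
    (hst : SphericallyTransitive (a * b)) :
    (∃ w, TreeAut.FixesEnd a w) ∧ ∃ w, TreeAut.FixesEnd b w := by
  have hfix : ∀ n, (∃ v : Level d (n + 1), levelHom d (n + 1) a v = v) ∧
      ∃ v : Level d (n + 1), levelHom d (n + 1) b v = v := by
    intro n
    have := Level.nonempty hodd.pos (n + 1)
    exact exists_fixed_of_odd_card (levelHom_mul_self ha2) (levelHom_mul_self hb2)
      (map_mul (levelHom d (n + 1)) a b ▸ hst.levelHom_zpow (Nat.le_add_left 1 n))
      (by rw [card_level]; exact hodd.pow)
  simp only [TreeAut.exists_fixesEnd_iff]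
  exact ⟨fun n => a.antitone_exists_fixed_level n.le_succ (hfix n).1,
    fun n => b.antitone_exists_fixed_level n.le_succ (hfix n).2⟩

theorem exists_fixesEnd_iff_not_of_even (hd : 0 < d) (heven : Even d) (ha2 : a * a = 1)
    (hb2 : b * b = 1) (hst : SphericallyTransitive (a * b)) :
    (∃ w, TreeAut.FixesEnd a w) ↔ ¬ ∃ w, TreeAut.FixesEnd b w := by
  have hxor : ∀ n, (∃ v : Level d (n + 1), levelHom d (n + 1) a v = v) ↔
      ¬ ∃ v : Level d (n + 1), levelHom d (n + 1) b v = v := by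
    intro n
    have := Level.nonempty hd (n + 1)
    exact exists_fixed_iff_not_of_even_card (levelHom_mul_self ha2) (levelHom_mul_self hb2)
      (map_mul (levelHom d (n + 1)) a b ▸ hst.levelHom_zpow (Nat.le_add_left 1 n))
      (by rw [card_level]; exact heven.pow_of_ne_zero n.succ_ne_zero)
  rw [TreeAut.exists_fixesEnd_iff, TreeAut.exists_fixesEnd_iff]
  constructor
  · exact fun ha hb => (hxor 0).mp (ha 1) (hb 1)
  · intro hb n
    obtain ⟨n₀, hn₀⟩ := not_forall.mp hb
    refine a.antitone_exists_fixed_level (by omega : n ≤ max n n₀ + 1) ((hxor _).mpr fun h => ?_)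
    exact hn₀ (b.antitone_exists_fixed_level (by omega) h)

theorem ncard_fixesEnd_pair (hd : 0 < d) (hab : a ≠ b) (ha2 : a * a = 1) (hb2 : b * b = 1)
    (hst : SphericallyTransitive (a * b)) :
    {g ∈ ({a, b} : Set (TreeAut d)) | ∃ w, TreeAut.FixesEnd g w}.ncard = 2 / Nat.gcd d 2 := by
  rcases Nat.even_or_odd d with heven | hodd
  · rw [Nat.gcd_eq_right heven.two_dvd,
      Set.ncard_sep_pair_eq_one (p := fun g => ∃ w, TreeAut.FixesEnd g w)
        (exists_fixesEnd_iff_not_of_even hd heven ha2 hb2 hst), Nat.div_self two_pos]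
  · obtain ⟨ha, hb⟩ := exists_fixesEnd_of_odd hodd ha2 hb2 hst
    rw [(Nat.coprime_two_right.mpr hodd).gcd_eq_one,
      Set.sep_eq_self_iff_mem_true.mpr (by simp [ha, hb]), Set.ncard_pair hab]

end DihedralTree

theorem dihedral_fixedRatio_general {d : ℕ} (hd : 2 ≤ d) (a b : TreeAut d)
    (hab : a ≠ b)
    (ha2 : a * a = 1) (hb2 : b * b = 1)
    (hst : SphericallyTransitive (a * b)) :
    Filter.Tendsto (fixedRatio (Subgroup.closure ({a, b} : Set (TreeAut d))))
      Filter.atTop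
      (nhds ((Set.ncard {g ∈ ({a, b} : Set (TreeAut d)) |
        ∃ w : ℕ → Fin d, TreeAut.FixesEnd g w} : ℝ) / 4)) := by
  have hg0 : (Nat.gcd d 2 : ℝ) ≠ 0 := by exact_mod_cast (Nat.gcd_pos_of_pos_right d two_pos).ne'
  rw [ncard_fixesEnd_pair (by omega) hab ha2 hb2 hst, Nat.cast_div (Nat.gcd_dvd_right d 2) hg0]
  convert tendsto_fixedRatio_closure_pair hd ha2 hb2 hst using 2
  field_simp
  ring

/-- If `G ≤ Aut(X*)` is generated by distinct non-trivial involutions `a, b` with `ab`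
spherically transitive, then `F(G) = r/4` where `r` is the number of elements of
`{a, b}` fixing at least one end of `X*`. -/
theorem dihedral_fixedRatio {d : ℕ} (hd : 2 ≤ d) (a b : TreeAut d)
    (hab : a ≠ b) (ha1 : a ≠ 1) (hb1 : b ≠ 1)
    (ha2 : a * a = 1) (hb2 : b * b = 1)
    (hst : SphericallyTransitive (a * b)) :
    Filter.Tendsto (fixedRatio (Subgroup.closure ({a, b} : Set (TreeAut d))))
      Filter.atTop
      (nhds ((Set.ncard {g ∈ ({a, b} : Set (TreeAut d)) |
        ∃ w : ℕ → Fin d, TreeAut.FixesEnd g w} : ℝ) / 4)) :=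
  dihedral_fixedRatio_general hd a b hab ha2 hb2 hst
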